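/- arXiv:1108.4178 — 2 statements merged into one kernel-verified Lean document; each statement's English description precedes it below -/
import Mathlib

section
/- For any prime p ≥ 11 (with p-1 not dividing 4), B_{p²-p-4} ≡ (18p+40)/25 · B_{p-5} - (7p+12)/18 · B_{2p-6} (mod p²). -/
/-- `a ≡ b (mod p^n)` in the `p`-adic sense for rationals. -/
def PadicCong (p : ℕ) (n : ℕ) (a b : ℚ) : Prop :=
  padicNorm p (a - b) ≤ (p : ℚ) ^ (-(n : ℤ))

/-!
Fix `a` with `p ∤ a` and write `j a = p² q_j + r_j`. Expanding `(j a)ⁿ = (r_j + p² q_j)ⁿ` to first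
order and summing over `j < p²` gives Voronoi's congruence
`(aⁿ - 1) Σ_{j<p²} jⁿ ≡ n p² Σ_j r_jⁿ⁻¹ q_j (mod p⁴)`, while Faulhaber's formula and
von Staudt–Clausen give `Σ_{j<p²} jⁿ ≡ p² Bₙ (mod p⁴)` for even `n ≥ 4`. Hence
`(aⁿ - 1) Bₙ ≡ n Σ_j r_jⁿ⁻¹ q_j (mod p²)`.

Along `n = k + t (p - 1)` both `aⁿ - 1` and `r^(n-1)` are affine in `t` modulo `p²`, with slopes
divisible by `p` (Fermat). So `(w + t d) Bₙ / n ≡ X + t Y (mod p²)` with `p ∣ d, Y` and `w = aᵏ - 1` a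
unit (such `a` exists as `p - 1 ∤ k`). Comparing `t = 0, 1, T` eliminates `X, Y` and gives
the Kummer congruences `β₀ ≡ β₁ (mod p)` and `β_T ≡ (1 - T) β₀ + T β₁ (mod p²)` for `β_t = Bₙ / n`.
For `k = p - 5`, `T = p - 1` this is the claim once its coefficients are reduced modulo `p²`.
-/

open Finset

/-- `x ∈ p^k ℤ_(p)`; `k` may be negative. -/
def PadicDvd (p : ℕ) (k : ℤ) (x : ℚ) : Prop :=
  padicNorm p x ≤ (p : ℚ) ^ (-k)

namespace PadicDvd

variable {p : ℕ} {k l : ℤ} {x y u : ℚ}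

theorem zero (k : ℤ) : PadicDvd p k 0 := by
  rw [PadicDvd, padicNorm.zero]; positivity

theorem of_eq (hx : PadicDvd p k x) (h : x = y) : PadicDvd p k y :=
  h ▸ hx

theorem neg (hx : PadicDvd p k x) : PadicDvd p k (-x) := by
  rwa [PadicDvd, padicNorm.neg]

variable [hp : Fact p.Prime]

theorem add (hx : PadicDvd p k x) (hy : PadicDvd p k y) : PadicDvd p k (x + y) :=
  padicNorm.nonarchimedean.trans (max_le hx hy)

theorem sub (hx : PadicDvd p k x) (hy : PadicDvd p k y) : PadicDvd p k (x - y) :=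
  sub_eq_add_neg x y ▸ hx.add hy.neg

theorem mul (hx : PadicDvd p k x) (hy : PadicDvd p l y) : PadicDvd p (k + l) (x * y) := by
  rw [PadicDvd, padicNorm.mul, neg_add, zpow_add₀ (by exact_mod_cast hp.out.ne_zero)]
  exact mul_le_mul hx hy (padicNorm.nonneg y) (by positivity)

theorem mono (hlk : l ≤ k) (hx : PadicDvd p k x) : PadicDvd p l x :=
  hx.trans (zpow_le_zpow_right₀ (by exact_mod_cast hp.out.one_le) (by omega))

theorem intCast (z : ℤ) : PadicDvd p 0 z := by
  simpa [PadicDvd] using padicNorm.of_int z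

theorem natCast (n : ℕ) : PadicDvd p 0 n := by
  exact_mod_cast intCast (n : ℤ)

theorem one : PadicDvd p 0 1 := by
  exact_mod_cast natCast (p := p) 1

theorem intCast_of_dvd {n : ℕ} {z : ℤ} (h : (p : ℤ) ^ n ∣ z) : PadicDvd p n z :=
  padicNorm.dvd_iff_norm_le.1 (by exact_mod_cast h)

theorem intCast_of_prime_dvd {z : ℤ} (h : (p : ℤ) ∣ z) : PadicDvd p 1 z :=
  intCast_of_dvd (n := 1) (by rwa [pow_one])

theorem sum {ι : Type*} {s : Finset ι} {f : ι → ℚ} (h : ∀ i ∈ s, PadicDvd p k (f i)) :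
    PadicDvd p k (∑ i ∈ s, f i) :=
  padicNorm.sum_le' h (by positivity)

theorem of_le_padicValRat (h : k ≤ padicValRat p x) : PadicDvd p k x := by
  rcases eq_or_ne x 0 with rfl | hx
  · exact zero k
  rw [PadicDvd, padicNorm.eq_zpow_of_nonzero hx]
  exact zpow_le_zpow_right₀ (by exact_mod_cast hp.out.one_le) (by omega)

theorem div_unit (hu : padicNorm p u = 1) (hx : PadicDvd p k x) : PadicDvd p k (x / u) := by
  rwa [PadicDvd, padicNorm.div, hu, div_one]

theorem of_unit_mul (hu : padicNorm p u = 1) (hx : PadicDvd p k (u * x)) : PadicDvd p k x := by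
  rwa [PadicDvd, padicNorm.mul, hu, one_mul] at hx

theorem of_prime_pow_mul (n : ℕ) (hx : PadicDvd p k ((p : ℚ) ^ n * x)) :
    PadicDvd p (k - n) x := by
  have hp0 : (0 : ℚ) < p := by exact_mod_cast hp.out.pos
  rw [PadicDvd, padicNorm.mul, IsAbsoluteValue.abv_pow (padicNorm p),
    padicNorm.padicNorm_p_of_prime, inv_pow, inv_mul_le_iff₀ (by positivity)] at hx
  rwa [PadicDvd, neg_sub, zpow_sub₀ hp0.ne', zpow_natCast, div_eq_mul_inv, ← zpow_neg]

theorem prime_pow (n : ℕ) : PadicDvd p n ((p : ℚ) ^ n) := by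
  exact_mod_cast intCast_of_dvd (dvd_refl ((p : ℤ) ^ n))

theorem padicNorm_eq_one (hu : padicNorm p u = 1) (h : PadicDvd p 1 (x - u)) :
    padicNorm p x = 1 := by
  have hxu : padicNorm p (x - u) < padicNorm p u := by
    refine h.trans_lt ?_
    rw [hu, zpow_neg_one]; exact inv_lt_one_of_one_lt₀ (by exact_mod_cast hp.out.one_lt)
  rw [← sub_add_cancel x u, padicNorm.add_eq_max_of_ne hxu.ne, max_eq_right hxu.le, hu]

end PadicDvd

theorem sum_range_pow_sub_mul_bernoulli (N n : ℕ) :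
    ∑ k ∈ range N, (k : ℚ) ^ n - N * bernoulli n =
      ∑ i ∈ range n, bernoulli i * n.choose i * ((N : ℚ) ^ (n + 1 - i) / (n + 1 - i : ℕ)) := by
  have hlast : bernoulli n * ((n + 1).choose n : ℕ) * (N : ℚ) ^ (n + 1 - n) / (n + 1) =
      N * bernoulli n := by
    rw [Nat.choose_succ_self_right, add_tsub_cancel_left]
    push_cast
    field_simp
  rw [sum_range_pow, sum_range_succ, hlast, add_sub_cancel_right]
  refine sum_congr rfl fun i hi ↦ ?_
  have hi : i < n + 1 := by simp at hi; omega
  have hchoose : (n.choose i : ℚ) * (n + 1) = (n + 1).choose i * (n + 1 - i : ℕ) := by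
    exact_mod_cast Nat.choose_mul_succ_eq n i
  have : ((n + 1 - i : ℕ) : ℚ) ≠ 0 := by norm_cast; omega
  rw [mul_div_assoc', div_eq_div_iff (by positivity) this]
  linear_combination (-(bernoulli i * (N : ℚ) ^ (n + 1 - i))) * hchoose

theorem sum_range_mul_mod {M : Type*} [AddCommMonoid M] {N a : ℕ} (ha : a.Coprime N)
    (f : ℕ → M) : ∑ j ∈ range N, f (j * a % N) = ∑ j ∈ range N, f j := by
  rcases N.eq_zero_or_pos with rfl | hN
  · simp
  have hinj : Set.InjOn (fun j ↦ j * a % N) (range N) := fun i hi j hj hij ↦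
    (Nat.ModEq.cancel_right_of_coprime (Nat.coprime_comm.1 ha) hij).eq_of_lt_of_lt
      (mem_range.1 hi) (mem_range.1 hj)
  have himage : (range N).image (fun j ↦ j * a % N) = range N :=
    eq_of_subset_of_card_le (image_subset_iff.2 fun _ _ ↦ mem_range.2 (Nat.mod_lt _ hN))
      (card_image_of_injOn hinj).ge
  rw [← sum_image hinj, himage]

/-- `Σ_{j<N} g(r_j) q_j`, where `j a = N q_j + r_j` with `0 ≤ r_j < N`. -/
def voronoiSum (N a : ℕ) (g : ℤ → ℤ) : ℤ :=
  ∑ j ∈ range N, g (j * a % N : ℕ) * (j * a / N : ℕ)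

theorem sq_dvd_voronoi {N a : ℕ} (ha : a.Coprime N) (n : ℕ) :
    (N : ℤ) ^ 2 ∣ ((a : ℤ) ^ n - 1) * ∑ j ∈ range N, (j : ℤ) ^ n
      - n * N * voronoiSum N a (· ^ (n - 1)) := by
  have key (j : ℕ) : (N : ℤ) ^ 2 ∣ ((j * a : ℕ) : ℤ) ^ n -
      ((j * a % N : ℕ) : ℤ) ^ (n - 1) * (N * (j * a / N : ℕ)) * n - ((j * a % N : ℕ) : ℤ) ^ n := by
    have hja : ((j * a : ℕ) : ℤ) = (j * a % N : ℕ) + N * (j * a / N : ℕ) := by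
      exact_mod_cast (Nat.mod_add_div (j * a) N).symm
    rw [hja]
    exact (pow_dvd_pow_of_dvd (dvd_mul_right _ _) 2).trans (sq_dvd_add_pow_sub_sub _ _ n)
  obtain ⟨c, hc⟩ := dvd_sum (s := range N) fun j _ ↦ key j
  refine ⟨c, ?_⟩
  rw [← hc, voronoiSum, sum_sub_distrib, sum_sub_distrib,
    sum_range_mul_mod ha (fun r ↦ ((r : ℕ) : ℤ) ^ n), mul_sum, mul_sum, sub_right_comm,
    ← sum_sub_distrib, ← sum_sub_distrib, ← sum_sub_distrib]
  refine sum_congr rfl fun j _ ↦ ?_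
  push_cast
  ring

section

variable {p : ℕ} [hp : Fact p.Prime]

theorem padicDvd_one_div_prime {q : ℕ} (hq : q.Prime) : PadicDvd p (-1) (1 / q) := by
  have := Fact.mk hq
  rw [PadicDvd, one_div, IsAbsoluteValue.abv_inv (padicNorm p), neg_neg, zpow_one]
  rcases eq_or_ne p q with rfl | hpq
  · rw [padicNorm.padicNorm_p_of_prime, inv_inv]
  · rw [padicNorm.padicNorm_of_prime_of_ne hpq, inv_one]; exact_mod_cast hp.out.one_le

theorem padicDvd_bernoulli (n : ℕ) : PadicDvd p (-1) (bernoulli n) := by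
  obtain ⟨k, rfl | rfl⟩ := Nat.even_or_odd' n
  · obtain ⟨z, hz⟩ := Bernoulli.vonStaudt_clausen k
    rw [eq_sub_of_add_eq hz.symm]
    exact ((PadicDvd.intCast z).mono (by norm_num)).sub
      (PadicDvd.sum fun q hq ↦ padicDvd_one_div_prime (mem_filter.1 hq).2.1)
  · rcases eq_or_ne k 0 with rfl | hk
    · rw [bernoulli_one, neg_div]; exact (padicDvd_one_div_prime Nat.prime_two).neg
    · rw [bernoulli_eq_zero_of_odd (odd_two_mul_add_one k) (by omega)]; exact PadicDvd.zero _

theorem padicValNat_add_five_le {j : ℕ} (hj : 3 ≤ j) : padicValNat p j + 5 ≤ 2 * j := by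
  set v := padicValNat p j
  have h2v : 2 ^ v ≤ j := (Nat.pow_le_pow_left hp.out.two_le v).trans
    (Nat.le_of_dvd (by omega) pow_padicValNat_dvd)
  rcases Nat.lt_or_ge v 2 with hv | hv
  · omega
  · have h4 : 2 ^ v = 4 * 2 ^ (v - 2) := by rw [← pow_sub_mul_pow 2 hv]; ring
    have := Nat.lt_two_pow_self (n := v - 2)
    omega

theorem padicDvd_prime_sq_pow_div {j : ℕ} (hj : 3 ≤ j) :
    PadicDvd p 5 (((p : ℚ) ^ 2) ^ j / j) := by
  refine PadicDvd.of_le_padicValRat ?_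
  have hp0 : (p : ℚ) ≠ 0 := by exact_mod_cast hp.out.ne_zero
  rw [padicValRat.div (by positivity) (by norm_cast; omega), ← pow_mul, padicValRat.pow,
    padicValRat.self hp.out.one_lt, padicValRat.of_nat]
  have := padicValNat_add_five_le (p := p) hj
  omega

theorem padicDvd_sum_range_sq_pow_sub {n : ℕ} (hn : Even n) (h4 : 4 ≤ n) :
    PadicDvd p 4 (∑ k ∈ range (p ^ 2), (k : ℚ) ^ n - (p : ℚ) ^ 2 * bernoulli n) := by
  have := sum_range_pow_sub_mul_bernoulli (p ^ 2) n
  push_cast at this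
  rw [this]
  refine PadicDvd.sum fun i hi ↦ ?_
  have hi : i < n := mem_range.1 hi
  rcases eq_or_ne i (n - 1) with rfl | hi'
  · rw [bernoulli_eq_zero_of_odd (Nat.Even.sub_odd (by omega) hn odd_one) (by omega), zero_mul,
      zero_mul]
    exact PadicDvd.zero 4
  · exact ((padicDvd_bernoulli i).mul (PadicDvd.natCast _)).mul
      (padicDvd_prime_sq_pow_div (by omega)) |>.mono (by norm_num)

theorem dvd_pow_mul_pow_sub_one (b : ℤ) {m : ℕ} (hm : m ≠ 0) :
    (p : ℤ) ∣ b ^ m * (b ^ (p - 1) - 1) := by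
  obtain ⟨m, rfl⟩ := Nat.exists_eq_add_one_of_ne_zero hm
  rw [← ZMod.intCast_zmod_eq_zero_iff_dvd]
  push_cast
  rw [mul_sub, mul_one, pow_succ, mul_assoc, ← pow_succ', Nat.sub_add_cancel hp.out.one_le,
    ZMod.pow_card, ← pow_succ, sub_self]

theorem sq_dvd_pow_add_mul_sub (b : ℤ) {m : ℕ} (hm : 2 ≤ m) (t : ℕ) :
    (p : ℤ) ^ 2 ∣ b ^ (m + t * (p - 1)) - b ^ m * (1 + t * (b ^ (p - 1) - 1)) := by
  have e : b ^ (m + t * (p - 1)) - b ^ m * (1 + t * (b ^ (p - 1) - 1)) = b ^ m *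
      ((1 + (b ^ (p - 1) - 1)) ^ t - 1 ^ (t - 1) * (b ^ (p - 1) - 1) * t - 1 ^ t) := by
    rw [pow_add, pow_mul']; ring
  rw [e]
  by_cases hpb : (p : ℤ) ∣ b
  · exact ((pow_dvd_pow_of_dvd hpb 2).trans (pow_dvd_pow b hm)).mul_right _
  · have hferm : (p : ℤ) ∣ b ^ (p - 1) - 1 :=
      ((Nat.prime_iff_prime_int.mp hp.out).dvd_or_dvd
        (by simpa using dvd_pow_mul_pow_sub_one (p := p) b one_ne_zero)).resolve_left hpb
    exact ((pow_dvd_pow_of_dvd hferm 2).trans (sq_dvd_add_pow_sub_sub _ _ t)).mul_left _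

theorem dvd_voronoiSum_pow_mul_pow_sub_one (N a : ℕ) {m : ℕ} (hm : m ≠ 0) :
    (p : ℤ) ∣ voronoiSum N a (fun r ↦ r ^ m * (r ^ (p - 1) - 1)) :=
  dvd_sum fun _ _ ↦ (dvd_pow_mul_pow_sub_one _ hm).mul_right _

theorem sq_dvd_voronoiSum_pow_sub (N a : ℕ) {m : ℕ} (hm : 2 ≤ m) (t : ℕ) :
    (p : ℤ) ^ 2 ∣ voronoiSum N a (· ^ (m + t * (p - 1))) -
      (voronoiSum N a (· ^ m) + t * voronoiSum N a (fun r ↦ r ^ m * (r ^ (p - 1) - 1))) := by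
  rw [voronoiSum, voronoiSum, voronoiSum, mul_sum, ← sum_add_distrib, ← sum_sub_distrib]
  refine dvd_sum fun j _ ↦ ?_
  exact ((sq_dvd_pow_add_mul_sub (p := p) ((j * a % N : ℕ) : ℤ) hm t).mul_right
    ((j * a / N : ℕ) : ℤ)).trans (dvd_of_eq (by ring))

theorem voronoi_congruence {a n : ℕ} (hpa : ¬ p ∣ a) (hn : Even n) (h4 : 4 ≤ n) :
    PadicDvd p 2 (((a : ℚ) ^ n - 1) * bernoulli n - n * voronoiSum (p ^ 2) a (· ^ (n - 1))) := by
  have hcop : a.Coprime (p ^ 2) := ((hp.out.coprime_iff_not_dvd.2 hpa).symm).pow_right 2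
  have hV := PadicDvd.intCast_of_dvd (p := p) (n := 4)
    (by simpa [← pow_mul] using sq_dvd_voronoi hcop n)
  have hS := (PadicDvd.intCast ((a : ℤ) ^ n - 1)).mul (padicDvd_sum_range_sq_pow_sub (p := p) hn h4)
  have key : PadicDvd p 4 ((p : ℚ) ^ 2 *
      (((a : ℚ) ^ n - 1) * bernoulli n - n * voronoiSum (p ^ 2) a (· ^ (n - 1)))) := by
    push_cast at hV hS
    exact (hV.sub hS).of_eq (by ring)
  simpa using key.of_prime_pow_mul 2

theorem exists_not_dvd_pow_sub_one {k : ℕ} (hk0 : k ≠ 0) (hk : k < p - 1) :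
    ∃ a : ℕ, ¬ p ∣ a ∧ ¬ (p : ℤ) ∣ (a : ℤ) ^ k - 1 := by
  obtain ⟨u, hu⟩ := exists_pow_ne_one_of_isCyclic (G := (ZMod p)ˣ) hk0
    (by rwa [Nat.card_eq_fintype_card, ZMod.card_units])
  refine ⟨(u : ZMod p).val, ?_, ?_⟩
  · rw [← ZMod.natCast_eq_zero_iff, ZMod.natCast_zmod_val]
    exact u.ne_zero
  · rw [← ZMod.intCast_zmod_eq_zero_iff_dvd]
    push_cast
    rw [ZMod.natCast_zmod_val, sub_eq_zero]
    exact fun h ↦ hu (Units.ext (by simpa using h))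

theorem kummer_relation {a k : ℕ} (hpa : ¬ p ∣ a) (hw : padicNorm p ((a : ℚ) ^ k - 1) = 1)
    (hk : Even k) (hk4 : 4 ≤ k) (hp2 : p ≠ 2) (t : ℕ) (ht : ¬ p ∣ k + t * (p - 1)) :
    PadicDvd p 2 ((((a : ℚ) ^ k - 1) + t * ((a : ℚ) ^ k * ((a : ℚ) ^ (p - 1) - 1))) *
        (bernoulli (k + t * (p - 1)) / (k + t * (p - 1) : ℕ)) -
      (voronoiSum (p ^ 2) a (· ^ (k - 1)) +
        t * voronoiSum (p ^ 2) a (fun r ↦ r ^ (k - 1) * (r ^ (p - 1) - 1)))) := by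
  have hrel := voronoi_congruence hpa (hk.add ((hp.out.even_sub_one hp2).mul_left t)) (by omega)
  have hΦ := PadicDvd.intCast_of_dvd
    (sq_dvd_voronoiSum_pow_sub (p := p) (p ^ 2) a (m := k - 1) (by omega) t)
  rw [show k - 1 + t * (p - 1) = k + t * (p - 1) - 1 by omega] at hΦ
  push_cast at hΦ
  have hu := PadicDvd.intCast_of_dvd (sq_dvd_pow_add_mul_sub (p := p) (a : ℤ) (m := k) (by omega) t)
  push_cast at hu
  have hd := PadicDvd.intCast_of_prime_dvd
    (dvd_pow_mul_pow_sub_one (p := p) (a : ℤ) (m := k) (by omega))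
  push_cast at hd
  set n := k + t * (p - 1)
  have hunit : padicNorm p ((a : ℚ) ^ n - 1) = 1 := by
    refine PadicDvd.padicNorm_eq_one hw ?_
    exact (hu.mono (by norm_num)).add ((PadicDvd.natCast t).mul hd) |>.of_eq (by ring)
  have hB : PadicDvd p 0 (bernoulli n) := by
    refine PadicDvd.of_unit_mul hunit ?_
    exact (hrel.mono (by norm_num)).add ((PadicDvd.natCast n).mul (PadicDvd.intCast _))
      |>.of_eq (by ring)
  have hn : padicNorm p n = 1 := (padicNorm.nat_eq_one_iff n).2 ht
  have hn0 : (n : ℚ) ≠ 0 := fun h ↦ by simp [h] at hn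
  exact ((hrel.sub ((hu.mul hB).mono (by norm_num))).add
    (((PadicDvd.natCast n).mul hΦ).mono (by norm_num))).div_unit hn |>.of_eq (by field_simp; ring)

theorem exists_kummer_relation {k : ℕ} (hk : Even k) (hk4 : 4 ≤ k) (hkp : k < p - 1) :
    ∃ w d X Y : ℚ, padicNorm p w = 1 ∧ PadicDvd p 1 d ∧ PadicDvd p 0 X ∧ PadicDvd p 1 Y ∧
      ∀ t : ℕ, ¬ p ∣ k + t * (p - 1) →
        PadicDvd p 2 ((w + t * d) * (bernoulli (k + t * (p - 1)) / (k + t * (p - 1) : ℕ)) -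
          (X + t * Y)) := by
  obtain ⟨a, hpa, hpw⟩ := exists_not_dvd_pow_sub_one (p := p) (by omega) hkp
  have hw : padicNorm p ((a : ℚ) ^ k - 1) = 1 := by
    simpa using (padicNorm.int_eq_one_iff (p := p) _).2 hpw
  refine ⟨_, _, _, _, hw, ?_, PadicDvd.intCast _, ?_, kummer_relation hpa hw hk hk4 (by omega)⟩
  · exact_mod_cast PadicDvd.intCast_of_prime_dvd (dvd_pow_mul_pow_sub_one (a : ℤ) (by omega))
  · exact PadicDvd.intCast_of_prime_dvd (dvd_voronoiSum_pow_mul_pow_sub_one _ _ (by omega))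

section Kummer

variable {w d X Y t b : ℚ}

theorem integral_of_kummer (hw : padicNorm p w = 1) (hd : PadicDvd p 1 d)
    (hX : PadicDvd p 0 X) (hY : PadicDvd p 1 Y) (ht : PadicDvd p 0 t)
    (h : PadicDvd p 1 ((w + t * d) * b - (X + t * Y))) : PadicDvd p 0 b := by
  have hunit : padicNorm p (w + t * d) = 1 :=
    PadicDvd.padicNorm_eq_one hw ((ht.mul hd).of_eq (by ring))
  exact PadicDvd.of_unit_mul hunit <|
    (h.mono (by norm_num)).add (hX.add ((ht.mul hY).mono (by norm_num))) |>.of_eq (by ring)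

theorem kummer_mod_p (hw : padicNorm p w = 1) (hd : PadicDvd p 1 d)
    (hX : PadicDvd p 0 X) (hY : PadicDvd p 1 Y) (ht : PadicDvd p 0 t)
    (h : PadicDvd p 1 ((w + t * d) * b - (X + t * Y))) : PadicDvd p 1 (w * b - X) :=
  (h.sub ((ht.mul hd).mul (integral_of_kummer hw hd hX hY ht h))).add (ht.mul hY)
    |>.of_eq (by ring)

theorem kummer_congruences {T b₀ b₁ : ℚ} (hw : padicNorm p w = 1) (hd : PadicDvd p 1 d)
    (hX : PadicDvd p 0 X) (hY : PadicDvd p 1 Y) (hT : PadicDvd p 0 T)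
    (h₀ : PadicDvd p 2 (w * b₀ - X)) (h₁ : PadicDvd p 2 ((w + d) * b₁ - (X + Y)))
    (h : PadicDvd p 2 ((w + T * d) * b - (X + T * Y))) :
    PadicDvd p 0 b₁ ∧ PadicDvd p 1 (b₀ - b₁) ∧ PadicDvd p 2 (b - ((1 - T) * b₀ + T * b₁)) := by
  have h₁' : PadicDvd p 1 ((w + 1 * d) * b₁ - (X + 1 * Y)) :=
    (h₁.mono (by norm_num)).of_eq (by ring)
  have e₁ := kummer_mod_p hw hd hX hY PadicDvd.one h₁'
  have eT := kummer_mod_p hw hd hX hY hT (h.mono (by norm_num))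
  refine ⟨integral_of_kummer hw hd hX hY PadicDvd.one h₁',
    PadicDvd.of_unit_mul hw ((h₀.mono (by norm_num)).sub e₁ |>.of_eq (by ring)), ?_⟩
  have hbb : PadicDvd p 1 (b - b₁) := PadicDvd.of_unit_mul hw ((eT.sub e₁).of_eq (by ring))
  -- `w (b - (1 - T) b₀ - T b₁)` is a combination of the three relations plus `T d (b - b₁) ∈ p²`
  exact PadicDvd.of_unit_mul hw <| ((h.add ((hT.sub PadicDvd.one).mul h₀ |>.mono (by norm_num))).sub
    ((hT.mul h₁).mono (by norm_num))).sub ((hT.mul hd).mul hbb |>.mono (by norm_num))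
    |>.of_eq (by ring)

end Kummer

theorem padicDvd_kummer_combination (hp7 : 7 ≤ p) {b₀ b₁ b : ℚ} (h₁ : PadicDvd p 0 b₁)
    (h01 : PadicDvd p 1 (b₀ - b₁)) (h : PadicDvd p 2 (b - ((1 - (p - 1)) * b₀ + (p - 1) * b₁))) :
    PadicDvd p 2 ((p ^ 2 - p - 4) * b -
      ((18 * p + 40) / 25 * ((p - 5) * b₀) - (7 * p + 12) / 18 * ((2 * p - 6) * b₁))) := by
  have hcop (q : ℕ) (hq : q.Prime) (hqp : q < p) : Nat.Coprime p q :=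
    (Nat.coprime_primes hp.out hq).2 (by omega)
  have h450 : padicNorm p (450 : ℚ) = 1 := by
    have : Nat.Coprime p (2 * 3 ^ 2 * 5 ^ 2) :=
      ((hcop 2 Nat.prime_two (by omega)).mul_right
        ((hcop 3 Nat.prime_three (by omega)).pow_right 2)).mul_right
          ((hcop 5 Nat.prime_five (by omega)).pow_right 2)
    exact_mod_cast (padicNorm.nat_eq_one_iff 450).2 (hp.out.coprime_iff_not_dvd.1 this)
  have hp1 : PadicDvd p 1 (p : ℚ) := by simpa using PadicDvd.prime_pow (p := p) 1
  -- The stated coefficients differ from the interpolation coefficients `(p²-p-4)(2-p)/(p-5)` and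
  -- `(p²-p-4)(p-1)/(2p-6)` by `p (4/5, -2/3)` modulo `p²`, which the congruence mod `p` absorbs.
  have hsum := ((PadicDvd.intCast (450 * ((p : ℤ) ^ 2 - p - 4))).mul h).add
    ((((PadicDvd.intCast (18 * (100 + 57 * p - 25 * p ^ 2))).mul hp1).mul h01).mono (by norm_num))
    |>.add (((PadicDvd.intCast 476).mul (PadicDvd.prime_pow 2)).mul h₁ |>.mono (by norm_num))
  refine PadicDvd.of_unit_mul h450 (hsum.mono (by norm_num) |>.of_eq ?_)
  push_cast
  ring

theorem padicCong_of_kummer (hp7 : 7 ≤ p) {B₀ B₁ B : ℚ}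
    (h₁ : PadicDvd p 0 (B₁ / (2 * p - 6 : ℕ)))
    (h01 : PadicDvd p 1 (B₀ / (p - 5 : ℕ) - B₁ / (2 * p - 6 : ℕ)))
    (h : PadicDvd p 2 (B / (p ^ 2 - p - 4 : ℕ) -
      ((1 - (p - 1 : ℕ)) * (B₀ / (p - 5 : ℕ)) + (p - 1 : ℕ) * (B₁ / (2 * p - 6 : ℕ))))) :
    PadicCong p 2 B ((18 * p + 40) / 25 * B₀ - (7 * p + 12) / 18 * B₁) := by
  have hpp : p ≤ p ^ 2 := Nat.le_self_pow two_ne_zero p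
  have hp4 : 4 ≤ p ^ 2 - p := Nat.le_sub_of_add_le (by nlinarith)
  push_cast [Nat.cast_sub (show 5 ≤ p by omega), Nat.cast_sub (show 6 ≤ 2 * p by omega),
    Nat.cast_sub (show 1 ≤ p by omega), Nat.cast_sub hp4, Nat.cast_sub hpp] at h₁ h01 h
  have hp7' : (7 : ℚ) ≤ p := by exact_mod_cast hp7
  have n₀ : (p : ℚ) - 5 ≠ 0 := by linarith
  have n₁ : 2 * (p : ℚ) - 6 ≠ 0 := by linarith
  have n : (p : ℚ) ^ 2 - p - 4 ≠ 0 := by nlinarith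
  obtain ⟨b₀, rfl⟩ : ∃ b₀, B₀ = (p - 5) * b₀ := ⟨_, (mul_div_cancel₀ B₀ n₀).symm⟩
  obtain ⟨b₁, rfl⟩ : ∃ b₁, B₁ = (2 * p - 6) * b₁ := ⟨_, (mul_div_cancel₀ B₁ n₁).symm⟩
  obtain ⟨b, rfl⟩ : ∃ b, B = (p ^ 2 - p - 4) * b := ⟨_, (mul_div_cancel₀ B n).symm⟩
  rw [mul_div_cancel_left₀ b₁ n₁] at h₁ h01 h
  rw [mul_div_cancel_left₀ b₀ n₀] at h01 h
  rw [mul_div_cancel_left₀ b n] at h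
  exact padicDvd_kummer_combination hp7 h₁ h01 h

end

theorem sub_five_add_sub_one_mul_sub_one {p : ℕ} (hp : 5 ≤ p) :
    p - 5 + (p - 1) * (p - 1) = p ^ 2 - p - 4 := by
  have : p + 4 ≤ p ^ 2 := by nlinarith
  rw [Nat.sub_sub]
  zify [hp, show 1 ≤ p by omega, this]
  ring

theorem stmt18 (p : ℕ) (hp : p.Prime) (h11 : 11 ≤ p) :
    PadicCong p 2 (bernoulli (p ^ 2 - p - 4))
      ((18 * (p : ℚ) + 40) / 25 * bernoulli (p - 5)
        - (7 * (p : ℚ) + 12) / 18 * bernoulli (2 * p - 6)) := by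
  have := Fact.mk hp
  have e₁ : p - 5 + (p - 1) = 2 * p - 6 := by omega
  have e₂ := sub_five_add_sub_one_mul_sub_one (show 5 ≤ p by omega)
  obtain ⟨w, d, X, Y, hw, hd, hX, hY, hrel⟩ := exists_kummer_relation (p := p) (k := p - 5)
    (by obtain ⟨r, hr⟩ := hp.even_sub_one (by omega); exact ⟨r - 2, by omega⟩) (by omega) (by omega)
  have h₀ := hrel 0 (by
    simpa using Nat.not_dvd_of_pos_of_lt (show 0 < p - 5 by omega) (show p - 5 < p by omega))
  have h₁ := hrel 1 (by
    rw [one_mul, e₁, Nat.dvd_sub_iff_right (by omega) (dvd_mul_left p 2)]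
    exact Nat.not_dvd_of_pos_of_lt (by omega) (by omega))
  have h := hrel (p - 1) (by
    rw [e₂, Nat.dvd_sub_iff_right (Nat.le_sub_of_add_le (by nlinarith))
      (Nat.dvd_sub (dvd_pow_self p two_ne_zero) dvd_rfl)]
    exact Nat.not_dvd_of_pos_of_lt (by omega) (by omega))
  simp only [Nat.cast_zero, Nat.cast_one, zero_mul, one_mul, add_zero, e₁, e₂] at h₀ h₁ h
  obtain ⟨hb₁, h01, h2⟩ := kummer_congruences hw hd hX hY (PadicDvd.natCast (p - 1)) h₀ h₁ h
  exact padicCong_of_kummer (by omega) hb₁ h01 h2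
end

section
/- For any prime p ≥ 11, C(2p-1, p-1) ≡ 1 + pH₁ + p²H₂ + p³H₃ + p⁴H₄ + p⁵H₅ + p⁶H₆ (mod p⁸), where H_n = H_n(p) = ∑_{1≤i₁<⋯<i_n≤p-1} 1/(i₁⋯i_n). -/
/-!
Expanding `∏_{k=1}^{p-1} (1 + p/k) = C(2p-1, p-1)` gives `C(2p-1, p-1) = ∑_{j<p} p^j H_j`. Every
`H_j` is `p`-integral, so the tail `∑_{j≥7} p^j H_j` is divisible by `p^8` as soon as `p ∣ H_7`.
That holds for every odd `j`: the reflection `i ↦ p - i` permutes the `j`-subsets of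
`{1, …, p-1}`, so `2 H_j` is a sum of terms `1/a + 1/b = (a + b)/(ab)` with `a = ∏ i`,
`b = ∏ (p - i) ≡ (-1)^j a (mod p)`.
-/

open Finset

/-- `n`-th elementary symmetric function of `1, 1/2, …, 1/(p-1)`. -/
def Hsym (p n : ℕ) : ℚ :=
  ∑ s ∈ (Finset.Icc 1 (p - 1)).powersetCard n, ∏ i ∈ s, (1 : ℚ) / i

theorem prod_mul_add_one_eq_sum_pow_mul {ι R : Type*} [CommSemiring R] (x : R) (f : ι → R)
    (s : Finset ι) :
    ∏ i ∈ s, (x * f i + 1) =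
      ∑ j ∈ range (#s + 1), x ^ j * ∑ t ∈ s.powersetCard j, ∏ i ∈ t, f i := by
  rw [prod_add_one, sum_powerset]
  refine sum_congr rfl fun j _ => ?_
  rw [mul_sum]
  refine sum_congr rfl fun t ht => ?_
  rw [prod_mul_distrib, prod_const, (mem_powersetCard.1 ht).2]

theorem cast_add_choose_eq_prod (a m : ℕ) :
    ((a + m).choose m : ℚ) = ∏ k ∈ Icc 1 m, ((a : ℚ) * (1 / k) + 1) := by
  induction m with
  | zero => simp
  | succ m ih =>
    rw [prod_Icc_succ_top (by omega), ← ih]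
    have h : ((a + m + 1 : ℕ) : ℚ) * (a + m).choose m = (a + m + 1).choose (m + 1) * (m + 1) := by
      exact_mod_cast Nat.add_one_mul_choose_eq (a + m) m
    rw [← add_assoc]
    field_simp
    push_cast at h
    push_cast
    linear_combination -h

@[simp]
theorem Hsym_zero (p : ℕ) : Hsym p 0 = 1 := by
  simp [Hsym]

theorem cast_choose_eq_sum_pow_mul_Hsym {p : ℕ} (hp : 1 ≤ p) :
    ((2 * p - 1).choose (p - 1) : ℚ) = ∑ j ∈ range p, (p : ℚ) ^ j * Hsym p j := by
  rw [show 2 * p - 1 = p + (p - 1) by omega, cast_add_choose_eq_prod,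
    prod_mul_add_one_eq_sum_pow_mul, Nat.card_Icc, show p - 1 + 1 - 1 + 1 = p by omega]
  rfl

theorem image_const_sub_Icc_one_sub_one (p : ℕ) :
    (Icc 1 (p - 1)).image (p - ·) = Icc 1 (p - 1) := by
  ext x
  simp only [mem_image, mem_Icc]
  exact ⟨by rintro ⟨y, hy, rfl⟩; omega, fun h => ⟨p - x, by omega, by omega⟩⟩

theorem Hsym_eq_sum_prod_one_div_sub (p n : ℕ) :
    Hsym p n = ∑ t ∈ (Icc 1 (p - 1)).powersetCard n, ∏ i ∈ t, (1 : ℚ) / (p - i : ℕ) := by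
  have hreflect : (Icc 1 (p - 1)).val.map (p - ·) = (Icc 1 (p - 1)).val := by
    rw [← image_val_of_injOn, image_const_sub_Icc_one_sub_one]
    intro x hx y hy h
    simp only [coe_Icc, Set.mem_Icc] at hx hy h
    omega
  rw [Hsym, ← esymm_map_val, ← esymm_map_val]
  conv_lhs => rw [← hreflect, Multiset.map_map]
  rfl

theorem dvd_prod_add_prod_sub {p : ℕ} {t : Finset ℕ} (ht : ∀ i ∈ t, i ≤ p) (hodd : Odd #t) :
    p ∣ ∏ i ∈ t, i + ∏ i ∈ t, (p - i) := by
  rw [← ZMod.natCast_eq_zero_iff]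
  push_cast [prod_congr rfl fun i hi => Nat.cast_sub (R := ZMod p) (ht i hi)]
  simp only [ZMod.natCast_self, zero_sub, prod_neg, hodd.neg_one_pow]
  ring

theorem prod_one_div_natCast {ι : Type*} (t : Finset ι) (f : ι → ℕ) :
    ∏ i ∈ t, (1 : ℚ) / f i = ((∏ i ∈ t, f i : ℕ) : ℚ)⁻¹ := by
  simp [prod_inv_distrib]

section padicNorm

variable {p : ℕ} [Fact p.Prime]

theorem padicNorm_natCast_inv_eq_one {a : ℕ} (ha : ¬ p ∣ a) : padicNorm p (a : ℚ)⁻¹ = 1 := by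
  rw [IsAbsoluteValue.abv_inv (padicNorm p), (padicNorm.nat_eq_one_iff a).2 ha, inv_one]

theorem padicNorm_natCast_inv_add_inv_le {a b : ℕ} (ha : ¬ p ∣ a) (hb : ¬ p ∣ b)
    (hab : p ∣ a + b) :
    padicNorm p ((a : ℚ)⁻¹ + (b : ℚ)⁻¹) ≤ (p : ℚ)⁻¹ := by
  have ha0 : (a : ℚ) ≠ 0 := Nat.cast_ne_zero.2 (by rintro rfl; exact ha (dvd_zero p))
  have hb0 : (b : ℚ) ≠ 0 := Nat.cast_ne_zero.2 (by rintro rfl; exact hb (dvd_zero p))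
  have hsum : padicNorm p ((a + b : ℕ) : ℚ) ≤ (p : ℚ)⁻¹ := by
    simpa using (padicNorm.dvd_iff_norm_le (n := 1) (z := ((a + b : ℕ) : ℤ))).1
      (by rw [pow_one]; exact_mod_cast hab)
  rw [inv_add_inv ha0 hb0, div_eq_mul_inv, padicNorm.mul, ← Nat.cast_mul,
    padicNorm_natCast_inv_eq_one, mul_one]
  · exact_mod_cast hsum
  · exact (Nat.Prime.prime Fact.out).not_dvd_mul ha hb

theorem not_dvd_prod_of_mem_Icc {t : Finset ℕ} {f : ℕ → ℕ} (hf : ∀ i ∈ t, f i ∈ Icc 1 (p - 1)) :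
    ¬ p ∣ ∏ i ∈ t, f i := by
  refine Prime.not_dvd_finsetProd (Nat.Prime.prime Fact.out) fun i hi => ?_
  have := mem_Icc.1 (hf i hi)
  exact Nat.not_dvd_of_pos_of_lt (by omega) (by omega)

theorem padicNorm_Hsym_le_one (n : ℕ) : padicNorm p (Hsym p n) ≤ 1 := by
  refine padicNorm.sum_le' (fun t ht => ?_) zero_le_one
  rw [prod_one_div_natCast t fun i => i, padicNorm_natCast_inv_eq_one]
  exact not_dvd_prod_of_mem_Icc fun i hi => (mem_powersetCard.1 ht).1 hi

theorem padicNorm_Hsym_le_of_odd (hp : p ≠ 2) {n : ℕ} (hn : Odd n) :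
    padicNorm p (Hsym p n) ≤ (p : ℚ)⁻¹ := by
  have h2 : padicNorm p 2 = 1 := by
    exact_mod_cast (padicNorm.nat_eq_one_iff 2).2 fun h =>
      hp ((Nat.prime_dvd_prime_iff_eq Fact.out Nat.prime_two).1 h)
  have hdouble : 2 * Hsym p n = ∑ t ∈ (Icc 1 (p - 1)).powersetCard n,
      (∏ i ∈ t, (1 : ℚ) / i + ∏ i ∈ t, (1 : ℚ) / (p - i : ℕ)) := by
    rw [sum_add_distrib, ← Hsym_eq_sum_prod_one_div_sub, Hsym, two_mul]
  rw [← one_mul (padicNorm p _), ← h2, ← padicNorm.mul, hdouble]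
  refine padicNorm.sum_le' (fun t ht => ?_) (by positivity)
  obtain ⟨hsub, hcard⟩ := mem_powersetCard.1 ht
  have hmem : ∀ i ∈ t, i ∈ Icc 1 (p - 1) := fun i hi => hsub hi
  rw [prod_one_div_natCast t fun i => i, prod_one_div_natCast t (p - ·)]
  refine padicNorm_natCast_inv_add_inv_le (not_dvd_prod_of_mem_Icc hmem)
    (not_dvd_prod_of_mem_Icc fun i hi => ?_) (dvd_prod_add_prod_sub (fun i hi => ?_) (hcard ▸ hn))
  · have := mem_Icc.1 (hmem i hi); simp only [mem_Icc]; omega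
  · have := mem_Icc.1 (hmem i hi); omega

theorem padicNorm_pow_mul_le {x : ℚ} (j : ℕ) {k : ℤ} (hx : padicNorm p x ≤ (p : ℚ) ^ (-k)) :
    padicNorm p ((p : ℚ) ^ j * x) ≤ (p : ℚ) ^ (-(j + k)) := by
  have hp : (0 : ℚ) < p := by exact_mod_cast (Fact.out : p.Prime).pos
  rw [padicNorm.mul, IsAbsoluteValue.abv_pow (padicNorm p), padicNorm.padicNorm_p_of_prime,
    neg_add, zpow_add₀ hp.ne', inv_pow, ← zpow_natCast, ← zpow_neg]
  gcongr

end padicNorm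

theorem stmt19 (p : ℕ) (hp : p.Prime) (h11 : 11 ≤ p) :
    PadicCong p 8 ((Nat.choose (2 * p - 1) (p - 1)) : ℚ)
      (1 + (p : ℚ) * Hsym p 1 + (p : ℚ) ^ 2 * Hsym p 2 + (p : ℚ) ^ 3 * Hsym p 3
        + (p : ℚ) ^ 4 * Hsym p 4 + (p : ℚ) ^ 5 * Hsym p 5
        + (p : ℚ) ^ 6 * Hsym p 6) := by
  have := Fact.mk hp
  have htail : ((2 * p - 1).choose (p - 1) : ℚ) - (1 + (p : ℚ) * Hsym p 1 + (p : ℚ) ^ 2 * Hsym p 2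
      + (p : ℚ) ^ 3 * Hsym p 3 + (p : ℚ) ^ 4 * Hsym p 4 + (p : ℚ) ^ 5 * Hsym p 5
      + (p : ℚ) ^ 6 * Hsym p 6) = ∑ j ∈ Ico 7 p, (p : ℚ) ^ j * Hsym p j := by
    rw [cast_choose_eq_sum_pow_mul_Hsym (by omega), ← sum_range_add_sum_Ico _ (by omega : 7 ≤ p)]
    simp only [sum_range_succ, sum_range_zero, Hsym_zero]
    ring
  have hp1 : (1 : ℚ) ≤ p := by exact_mod_cast hp.one_lt.le
  rw [PadicCong, htail]
  refine padicNorm.sum_le' (fun j hj => ?_) (by positivity)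
  obtain rfl | h8 := (mem_Ico.1 hj).1.eq_or_lt
  · calc padicNorm p ((p : ℚ) ^ 7 * Hsym p 7) ≤ (p : ℚ) ^ (-(7 + 1 : ℤ)) :=
          padicNorm_pow_mul_le 7 (by simpa using padicNorm_Hsym_le_of_odd (by omega) (by decide))
      _ = (p : ℚ) ^ (-(8 : ℕ) : ℤ) := by norm_num
  · calc padicNorm p ((p : ℚ) ^ j * Hsym p j) ≤ (p : ℚ) ^ (-(j + 0 : ℤ)) :=
          padicNorm_pow_mul_le j (by simpa using padicNorm_Hsym_le_one j)
      _ ≤ (p : ℚ) ^ (-(8 : ℕ) : ℤ) := zpow_le_zpow_right₀ hp1 (by omega)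
end
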